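/- arXiv:2410.20810 — 4 statements merged into one kernel-verified Lean document; each statement's English description precedes it below -/
import Mathlib

section
/- Let G be a bipartite graph, uv a bisimplicial edge of G, and S a vertex cut of G ⊖ uv (the graph obtained from G by deleting both u and v). If F_i and F_j are two distinct connected components of (G ⊖ uv) − S, then (N_G(u)\{v}) ∩ V(F_i) = ∅ or (N_G(v)\{u}) ∩ V(F_j) = ∅. -/
open SimpleGraph

variable {V : Type*}

/-- `S` is a vertex cut set of `G`: deleting the vertices of `S` disconnects the graph. -/
def SimpleGraph.IsVertexCutSet (G : SimpleGraph V) (S : Set V) : Prop :=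
  ¬ (G.induce Sᶜ).Preconnected

open scoped Classical in
/-- The vertex connectivity of a finite simple graph: the minimum size of a vertex cut if
one exists (i.e. if the graph is not complete), and `|V| - 1` otherwise. -/
noncomputable def SimpleGraph.vertexConnectivity [Finite V] (G : SimpleGraph V) : ℕ :=
  if ∃ S : Set V, G.IsVertexCutSet S then
    sInf {n | ∃ S : Set V, S.ncard = n ∧ G.IsVertexCutSet S}
  else Nat.card V - 1

/-- An edge `uv` is bisimplicial if `N(u) ∪ N(v)` induces a complete bipartite graph
with parts `N(u)` and `N(v)`. -/
def SimpleGraph.IsBisimplicialEdge (G : SimpleGraph V) (u v : V) : Prop :=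
  G.Adj u v ∧ ∀ x y, G.Adj u x → G.Adj v y → x ≠ y → G.Adj x y

/-- A cycle (closed walk) has a chord: an edge of `G` joining two vertices of the cycle
that is not an edge of the cycle. -/
def SimpleGraph.CycleHasChord (G : SimpleGraph V) {a : V} (c : G.Walk a a) : Prop :=
  ∃ x y, x ∈ c.support ∧ y ∈ c.support ∧ G.Adj x y ∧ s(x, y) ∉ c.edges

/-- A graph is chordal bipartite if it is bipartite and every cycle of length at least 6
has a chord. -/
def SimpleGraph.ChordalBipartite (G : SimpleGraph V) : Prop :=
  G.Colorable 2 ∧ ∀ ⦃a : V⦄ (c : G.Walk a a), c.IsCycle → 6 ≤ c.length → G.CycleHasChord c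

/-!
A bipartite graph has no triangles, so a neighbour `x` of `u` and a neighbour `y` of `v` are
distinct, and bisimpliciality of `uv` makes them adjacent. If `x` lay in `F_i` and `y` in `F_j`,
this edge would survive in `(G ⊖ uv) - S` and join the two components.
-/

namespace SimpleGraph

variable {G : SimpleGraph V}

theorem CliqueFree.not_adj_of_adj_of_adj (hG : G.CliqueFree 3) {u v x : V}
    (huv : G.Adj u v) (hux : G.Adj u x) : ¬ G.Adj v x := fun hvx => by
  classical
  exact hG {u, v, x} (is3Clique_triple_iff.2 ⟨huv, hux, hvx⟩)

theorem IsBisimplicialEdge.adj_of_adj_of_adj (hG : G.CliqueFree 3) {u v x y : V}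
    (huv : G.IsBisimplicialEdge u v) (hux : G.Adj u x) (hvy : G.Adj v y) : G.Adj x y := by
  refine huv.2 x y hux hvy ?_
  rintro rfl
  exact hG.not_adj_of_adj_of_adj huv.1 hux hvy

theorem ConnectedComponent.eq_of_adj_induce {s : Set V} {c d : (G.induce s).ConnectedComponent}
    {x y : V} (hx : x ∈ Subtype.val '' c.supp) (hy : y ∈ Subtype.val '' d.supp)
    (hxy : G.Adj x y) : c = d := by
  obtain ⟨⟨x, hxs⟩, hxc, rfl⟩ := hx
  obtain ⟨⟨y, hys⟩, hyd, rfl⟩ := hy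
  rw [← hxc, ← hyd]
  exact ConnectedComponent.sound (Adj.reachable (G := G.induce s) hxy)

end SimpleGraph

theorem stmt3_general (G : SimpleGraph V) (hbip : G.Colorable 2) (u v : V)
    (huv : G.IsBisimplicialEdge u v) (S : Set V)
    (c d : (G.induce (({u, v} : Set V) ∪ S)ᶜ).ConnectedComponent) (hcd : c ≠ d) :
    (G.neighborSet u \ {v}) ∩ (Subtype.val '' c.supp) = ∅ ∨
    (G.neighborSet v \ {u}) ∩ (Subtype.val '' d.supp) = ∅ := by
  by_contra! ⟨⟨x, ⟨hux, -⟩, hxc⟩, ⟨y, ⟨hvy, -⟩, hyd⟩⟩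
  have hG : G.CliqueFree 3 := hbip.cliqueFree (by norm_num)
  exact hcd (ConnectedComponent.eq_of_adj_induce hxc hyd (huv.adj_of_adj_of_adj hG hux hvy))

theorem stmt3 (G : SimpleGraph V) (hbip : G.Colorable 2) (u v : V)
    (huv : G.IsBisimplicialEdge u v) (S : Set V) (hS : S ⊆ ({u, v} : Set V)ᶜ)
    (hcut : ¬ (G.induce (({u, v} : Set V) ∪ S)ᶜ).Preconnected)
    (c d : (G.induce (({u, v} : Set V) ∪ S)ᶜ).ConnectedComponent) (hcd : c ≠ d) :
    (G.neighborSet u \ {v}) ∩ (Subtype.val '' c.supp) = ∅ ∨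
    (G.neighborSet v \ {u}) ∩ (Subtype.val '' d.supp) = ∅ :=
  stmt3_general G hbip u v huv S c d hcd
end

section
/- Let G be a bipartite graph with κ(G) = k ≥ 1 and at least three vertices, let uv be a bisimplicial edge of G, and let S be a vertex cut of G ⊖ uv. Then |S| ≥ k − 1. -/
open SimpleGraph

variable {V : Type*}

/-! If `|S| ≤ k - 2`, neither `S ∪ {u}` nor `S ∪ {v}` is a vertex cut. In `G - (S ∪ {u})` every
vertex outside `S ∪ {u, v}` reaches `v`, hence, stopping one step earlier, reaches a neighbour of `v`
while avoiding `u` and `v`; likewise for `u`. As `uv` is bisimplicial, a neighbour of `u` and a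
neighbour of `v` are equal or adjacent, so `G - (S ∪ {u, v})` would be connected. -/

namespace SimpleGraph

variable {G : SimpleGraph V}

lemma vertexConnectivity_le_ncard [Finite V] {S : Set V} (hS : G.IsVertexCutSet S) :
    G.vertexConnectivity ≤ S.ncard := by
  unfold vertexConnectivity
  rw [if_pos ⟨S, hS⟩]
  exact Nat.sInf_le ⟨S, rfl, hS⟩

/-- Reachability in `G.induce s`, phrased for vertices of `V` so that `s` can be rewritten freely. -/
def ReachableIn (G : SimpleGraph V) (s : Set V) (a b : V) : Prop :=
  ∃ p : G.Walk a b, ∀ x ∈ p.support, x ∈ s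

namespace ReachableIn

variable {s t : Set V} {a b c : V}

lemma refl (ha : a ∈ s) : G.ReachableIn s a a :=
  ⟨.nil, by simpa using ha⟩

lemma of_adj (hab : G.Adj a b) (ha : a ∈ s) (hb : b ∈ s) : G.ReachableIn s a b :=
  ⟨.cons hab .nil, by simp [ha, hb]⟩

lemma left_mem (h : G.ReachableIn s a b) : a ∈ s :=
  h.elim fun p hp ↦ hp a p.start_mem_support

lemma right_mem (h : G.ReachableIn s a b) : b ∈ s :=
  h.elim fun p hp ↦ hp b p.end_mem_support

lemma symm (h : G.ReachableIn s a b) : G.ReachableIn s b a :=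
  h.elim fun p hp ↦ ⟨p.reverse, by simpa using hp⟩

lemma trans (hab : G.ReachableIn s a b) (hbc : G.ReachableIn s b c) : G.ReachableIn s a c := by
  obtain ⟨p, hp⟩ := hab
  obtain ⟨q, hq⟩ := hbc
  refine ⟨p.append q, fun x hx ↦ ?_⟩
  rcases Walk.mem_support_append_iff p q |>.mp hx with hx | hx
  exacts [hp x hx, hq x hx]

lemma mono (hst : s ⊆ t) (h : G.ReachableIn s a b) : G.ReachableIn t a b :=
  h.elim fun p hp ↦ ⟨p, fun x hx ↦ hst (hp x hx)⟩

lemma exists_adj_sdiff_singleton {w : V} (h : G.ReachableIn s a w) (haw : a ≠ w) :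
    ∃ x, G.Adj w x ∧ G.ReachableIn (s \ {w}) a x := by
  obtain ⟨p, hp⟩ := h
  induction p with
  | nil => exact absurd rfl haw
  | @cons a d w had p ih =>
    have ha : a ∈ s \ {w} := ⟨hp a (by simp), haw⟩
    by_cases hdw : d = w
    · subst hdw
      exact ⟨a, had.symm, refl ha⟩
    · obtain ⟨x, hwx, hdx⟩ := ih hdw fun y hy ↦ hp y (by simp [hy])
      exact ⟨x, hwx, (of_adj had ha hdx.left_mem).trans hdx⟩

end ReachableIn

lemma induce_preconnected_iff_reachableIn {s : Set V} :
    (G.induce s).Preconnected ↔ ∀ a ∈ s, ∀ b ∈ s, G.ReachableIn s a b := by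
  refine ⟨fun h a ha b hb ↦ ?_, fun h ⟨a, ha⟩ ⟨b, hb⟩ ↦ ?_⟩
  · obtain ⟨p⟩ := h ⟨a, ha⟩ ⟨b, hb⟩
    refine ⟨p.map (Embedding.induce s).toHom, fun x hx ↦ ?_⟩
    obtain ⟨y, -, rfl⟩ := List.mem_map.mp (Walk.support_map _ p ▸ hx)
    exact y.2
  · obtain ⟨p, hp⟩ := h a ha b hb
    exact ⟨p.induce s hp⟩

lemma induce_sdiff_pair_preconnected {s : Set V} {u v : V}
    (huv : ∀ x y, G.Adj u x → G.Adj v y → x ≠ y → G.Adj x y)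
    (hu : (G.induce (s \ {u})).Preconnected) (hv : (G.induce (s \ {v})).Preconnected) :
    (G.induce (s \ {u, v})).Preconnected := by
  rw [induce_preconnected_iff_reachableIn] at hu hv ⊢
  intro a ha b hb
  simp only [Set.mem_sdiff, Set.mem_insert_iff, Set.mem_singleton_iff, not_or] at ha hb
  by_cases hus : u ∈ s \ {v}
  swap
  · refine (hv a ⟨ha.1, ha.2.2⟩ b ⟨hb.1, hb.2.2⟩).mono fun x hx ↦ ⟨hx.1, ?_⟩
    rintro (rfl | rfl)
    exacts [hus hx, hx.2 rfl]
  by_cases hvs : v ∈ s \ {u}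
  swap
  · refine (hu a ⟨ha.1, ha.2.1⟩ b ⟨hb.1, hb.2.1⟩).mono fun x hx ↦ ⟨hx.1, ?_⟩
    rintro (rfl | rfl)
    exacts [hx.2 rfl, hvs hx]
  obtain ⟨x, hux, hax⟩ := (hv a ⟨ha.1, ha.2.2⟩ u hus).exists_adj_sdiff_singleton ha.2.1
  obtain ⟨y, hvy, hby⟩ := (hu b ⟨hb.1, hb.2.1⟩ v hvs).exists_adj_sdiff_singleton hb.2.2
  rw [Set.sdiff_sdiff, Set.union_singleton] at hax hby
  rw [Set.pair_comm] at hby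
  have hxy : G.ReachableIn (s \ {u, v}) x y := by
    rcases eq_or_ne x y with rfl | hxy
    · exact .refl hax.right_mem
    · exact .of_adj (huv x y hux hvy hxy) hax.right_mem hby.right_mem
  exact (hax.trans hxy).trans hby.symm

end SimpleGraph

theorem stmt4_general [Finite V] (G : SimpleGraph V) (k : ℕ)
    (hk : G.vertexConnectivity = k)
    (u v : V) (huv : G.IsBisimplicialEdge u v)
    (S : Set V)
    (hcut : ¬ (G.induce (({u, v} : Set V) ∪ S)ᶜ).Preconnected) :
    k - 1 ≤ S.ncard := by
  by_contra! hsmall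
  have hconn : ∀ w, (G.induce (Sᶜ \ {w})).Preconnected := by
    intro w
    by_contra hcut_w
    rw [Set.sdiff_eq, ← Set.compl_union, Set.union_singleton] at hcut_w
    have hk_le : k ≤ (insert w S).ncard := hk ▸ vertexConnectivity_le_ncard hcut_w
    have := Set.ncard_insert_le w S
    omega
  rw [Set.compl_union, Set.inter_comm, ← Set.sdiff_eq] at hcut
  exact hcut (induce_sdiff_pair_preconnected huv.2 (hconn u) (hconn v))

theorem stmt4 [Finite V] (G : SimpleGraph V) (hbip : G.Colorable 2) (k : ℕ)
    (hk : G.vertexConnectivity = k) (hk1 : 1 ≤ k) (hcard : 3 ≤ Nat.card V)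
    (u v : V) (huv : G.IsBisimplicialEdge u v)
    (S : Set V) (hS : S ⊆ ({u, v} : Set V)ᶜ)
    (hcut : ¬ (G.induce (({u, v} : Set V) ∪ S)ᶜ).Preconnected) :
    k - 1 ≤ S.ncard :=
  stmt4_general G k hk u v huv S hcut
end

section
/- For every even n ≥ 4, there exists a 2-connected chordal bipartite graph with n vertices and exactly (3/2)n − 2 edges, namely the 2 × (n/2) grid graph (the Cartesian product of P_2 and P_{n/2}). -/
open SimpleGraph

variable {V : Type*}

/-!
The ladder `P₂ □ P_k` is bipartite as a box product of bipartite graphs. Given a cycle of length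
at least 6, pick a vertex `u` of it in the rightmost column the cycle reaches. The cycle must leave
`u` along its rung to `u'` and one step to the left, and likewise at `u'`; so the rung one column
further left is a chord, since otherwise the cycle would close up into the square through `u` and
`u'`. Deleting at most one vertex spares a whole row, to which every remaining vertex is joined by
its rung, hence the ladder is 2-connected. The edge count `k + 2(k - 1)` comes from the degree sum
of a box product.
-/

namespace SimpleGraph

variable {G : SimpleGraph V}

lemma Subgraph.Preconnected.verts_subset_of_neighborSet_subset {H : G.Subgraph} (hH : H.Preconnected)
    {T : Set V} {u : V} (hu : u ∈ H.verts) (huT : u ∈ T)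
    (hT : ∀ v ∈ T, H.neighborSet v ⊆ T) : H.verts ⊆ T := by
  intro z hz
  by_contra hzT
  obtain ⟨p⟩ := hH ⟨u, hu⟩ ⟨z, hz⟩
  obtain ⟨d, -, hdT, hdT'⟩ := p.exists_boundary_dart (Subtype.val ⁻¹' T) huT hzT
  exact hdT' (hT _ hdT d.adj)

namespace Walk

variable {a : V} {c : G.Walk a a}

lemma IsCycle.length_le_card (hc : c.IsCycle) {s : Finset V} (hs : ∀ v ∈ c.support, v ∈ s) :
    c.length ≤ s.card := by
  classical
  calc c.length = c.support.tail.length := by simp [length_support]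
    _ = c.support.tail.toFinset.card := (List.toFinset_card_of_nodup hc.support_nodup).symm
    _ ≤ s.card :=
      Finset.card_le_card fun v hv ↦ hs v (List.mem_of_mem_tail (List.mem_toFinset.mp hv))

lemma IsCycle.neighborSet_toSubgraph_eq_of_subset (hc : c.IsCycle) {v x y : V}
    (hv : v ∈ c.support) (h : c.toSubgraph.neighborSet v ⊆ {x, y}) :
    c.toSubgraph.neighborSet v = {x, y} :=
  Set.eq_of_subset_of_ncard_le h <| by
    rw [hc.ncard_neighborSet_toSubgraph_eq_two hv]
    exact (Set.ncard_insert_le x {y}).trans (by rw [Set.ncard_singleton])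

lemma IsCycle.neighborSet_toSubgraph_eq_pair (hc : c.IsCycle) {v x y : V} (hxy : x ≠ y)
    (hx : c.toSubgraph.Adj v x) (hy : c.toSubgraph.Adj v y) :
    c.toSubgraph.neighborSet v = {x, y} := by
  have h2 := hc.ncard_neighborSet_toSubgraph_eq_two (mem_support_of_adj_toSubgraph hx)
  exact (Set.eq_of_subset_of_ncard_le (Set.pair_subset (s := c.toSubgraph.neighborSet v) hx hy)
    (by rw [Set.ncard_pair hxy, h2]) (Set.finite_of_ncard_pos (by omega))).symm

lemma IsCycle.length_le_four_of_square (hc : c.IsCycle) {w₀ w₁ w₂ w₃ : V}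
    (h₀₂ : w₀ ≠ w₂) (h₁₃ : w₁ ≠ w₃) (h₀₁ : c.toSubgraph.Adj w₀ w₁) (h₁₂ : c.toSubgraph.Adj w₁ w₂)
    (h₂₃ : c.toSubgraph.Adj w₂ w₃) (h₃₀ : c.toSubgraph.Adj w₃ w₀) : c.length ≤ 4 := by
  classical
  have N₀ := hc.neighborSet_toSubgraph_eq_pair h₁₃ h₀₁ h₃₀.symm
  have N₁ := hc.neighborSet_toSubgraph_eq_pair h₀₂ h₀₁.symm h₁₂
  have N₂ := hc.neighborSet_toSubgraph_eq_pair h₁₃ h₁₂.symm h₂₃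
  have N₃ := hc.neighborSet_toSubgraph_eq_pair h₀₂ h₃₀ h₂₃.symm
  have hclosed : ∀ v ∈ ({w₀, w₁, w₂, w₃} : Set V),
      c.toSubgraph.neighborSet v ⊆ {w₀, w₁, w₂, w₃} := by
    rintro v (rfl | rfl | rfl | rfl) <;> simp [N₀, N₁, N₂, N₃, Set.insert_subset_iff]
  have hsub := c.toSubgraph_connected.preconnected.verts_subset_of_neighborSet_subset
    (mem_verts_toSubgraph c |>.mpr (mem_support_of_adj_toSubgraph h₀₁)) (by simp) hclosed
  calc c.length ≤ ({w₀, w₁, w₂, w₃} : Finset V).card :=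
        hc.length_le_card fun v hv ↦ by simpa using hsub ((mem_verts_toSubgraph c).mpr hv)
    _ ≤ 4 := Finset.card_le_four

end Walk

lemma le_vertexConnectivity [Finite V] {m : ℕ} (hcard : m + 1 ≤ Nat.card V)
    (h : ∀ S : Set V, S.ncard < m → (G.induce Sᶜ).Preconnected) : m ≤ G.vertexConnectivity := by
  unfold vertexConnectivity
  split_ifs with hcut
  · obtain ⟨S₀, hS₀⟩ := hcut
    refine le_csInf ⟨_, S₀, rfl, hS₀⟩ ?_
    rintro _ ⟨S, rfl, hS⟩
    by_contra! hlt
    exact hS (h S hlt)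
  · omega

variable {α β : Type*}

lemma Colorable.boxProd {G : SimpleGraph α} {H : SimpleGraph β} {n : ℕ} (hG : G.Colorable n)
    (hH : H.Colorable n) : (G □ H).Colorable n := by
  rcases n with _ | n
  · have := colorable_zero_iff.mp hG
    exact colorable_zero_iff.mpr inferInstance
  obtain ⟨f⟩ := hG
  obtain ⟨g⟩ := hH
  refine ⟨Coloring.mk (fun x ↦ f x.1 + g x.2) fun {x y} hxy ↦ ?_⟩
  rcases boxProd_adj.mp hxy with ⟨h₁, h₂⟩ | ⟨h₁, h₂⟩
  · rw [h₂, ne_eq, add_left_inj]; exact f.valid h₁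
  · rw [h₂, ne_eq, add_right_inj]; exact g.valid h₁

lemma ncard_edgeSet_boxProd [Finite α] [Finite β] (G : SimpleGraph α) (H : SimpleGraph β) :
    (G □ H).edgeSet.ncard = Nat.card β * G.edgeSet.ncard + Nat.card α * H.edgeSet.ncard := by
  classical
  have := Fintype.ofFinite α
  have := Fintype.ofFinite β
  simp only [← coe_edgeFinset, Set.ncard_coe_finset, Nat.card_eq_fintype_card]
  suffices 2 * (G □ H).edgeFinset.card =
      2 * (Fintype.card β * G.edgeFinset.card + Fintype.card α * H.edgeFinset.card) by omega
  rw [← sum_degrees_eq_twice_card_edges]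
  calc _ = ∑ x : α × β, (G.degree x.1 + H.degree x.2) :=
        Finset.sum_congr rfl fun x _ ↦ by rw [degree_boxProd]
    _ = ∑ a, ∑ b, (G.degree a + H.degree b) := Fintype.sum_prod_type _
    _ = _ := by
      simp only [Finset.sum_add_distrib, Finset.sum_const, Finset.card_univ, smul_eq_mul,
        ← Finset.mul_sum, sum_degrees_eq_twice_card_edges]
      ring

lemma ncard_edgeSet_pathGraph (m : ℕ) : (pathGraph (m + 1)).edgeSet.ncard = m := by
  have hrange : (pathGraph (m + 1)).edgeSet = Set.range fun i : Fin m ↦ s(i.castSucc, i.succ) := by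
    ext e
    induction e using Sym2.ind with | _ x y => ?_
    simp only [mem_edgeSet, pathGraph_adj, Set.mem_range, Sym2.eq_iff, Fin.ext_iff,
      Fin.val_castSucc, Fin.val_succ]
    constructor
    · rintro (h | h)
      · exact ⟨⟨x, by omega⟩, Or.inl ⟨rfl, h⟩⟩
      · exact ⟨⟨y, by omega⟩, Or.inr ⟨rfl, h⟩⟩
    · rintro ⟨i, ⟨h₁, h₂⟩ | ⟨h₁, h₂⟩⟩ <;> omega
  rw [hrange, Set.ncard_range_of_injective fun i j h ↦ ?_, Nat.card_fin]
  simp only [Sym2.eq_iff, Fin.ext_iff, Fin.val_castSucc, Fin.val_succ] at h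
  omega

lemma fin_two_eq_rev_of_ne {r s : Fin 2} (h : r ≠ s) : s = r.rev := by
  fin_cases r <;> fin_cases s <;> simp_all

lemma fin_two_rev_ne_self (r : Fin 2) : r.rev ≠ r := by
  fin_cases r <;> decide

abbrev ladderGraph (k : ℕ) : SimpleGraph (Fin 2 × Fin k) := pathGraph 2 □ pathGraph k

variable {k : ℕ}

lemma ladderGraph_adj {x y : Fin 2 × Fin k} :
    (ladderGraph k).Adj x y ↔
      (x.1 ≠ y.1 ∧ x.2 = y.2) ∨ ((x.2.val + 1 = y.2.val ∨ y.2.val + 1 = x.2.val) ∧ x.1 = y.1) := by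
  rw [boxProd_adj, pathGraph_two_eq_top, pathGraph_adj, top_adj]

lemma ladderGraph_colorable_two : (ladderGraph k).Colorable 2 :=
  (pathGraph.bicoloring 2).colorable.boxProd (pathGraph.bicoloring k).colorable

lemma ladderGraph_neighborSet_toSubgraph_of_maxColumn {a : Fin 2 × Fin k}
    {c : (ladderGraph k).Walk a a} (hc : c.IsCycle) {v : Fin 2 × Fin k} (hv : v ∈ c.support)
    (hmax : ∀ w ∈ c.support, w.2 ≤ v.2) :
    c.toSubgraph.neighborSet v =
      {(v.1.rev, v.2), (v.1, ⟨v.2 - 1, (Nat.sub_le _ _).trans_lt v.2.isLt⟩)} := by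
  refine hc.neighborSet_toSubgraph_eq_of_subset hv fun w hw ↦ ?_
  have hwv : w.2 ≤ v.2 := hmax w (Walk.mem_support_of_adj_toSubgraph hw.symm)
  rcases ladderGraph_adj.mp hw.adj_sub with ⟨h₁, h₂⟩ | ⟨h₁, h₂⟩
  · left
    exact Prod.ext (fin_two_eq_rev_of_ne h₁) h₂.symm
  · right
    refine Prod.ext h₂.symm (Fin.ext ?_)
    rw [Fin.le_def] at hwv
    dsimp only
    omega

lemma ladderGraph_cycleHasChord {a : Fin 2 × Fin k} {c : (ladderGraph k).Walk a a}
    (hc : c.IsCycle) (hlen : 6 ≤ c.length) : (ladderGraph k).CycleHasChord c := by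
  classical
  obtain ⟨u, hu, hmax⟩ := c.support.toFinset.exists_max_image Prod.snd ⟨a, by simp⟩
  simp only [List.mem_toFinset] at hu hmax
  set j : Fin k := ⟨u.2 - 1, (Nat.sub_le _ _).trans_lt u.2.isLt⟩
  have hNu := ladderGraph_neighborSet_toSubgraph_of_maxColumn hc hu hmax
  have huu' : c.toSubgraph.Adj u (u.1.rev, u.2) := by
    rw [← Subgraph.mem_neighborSet, hNu]; exact Set.mem_insert _ _
  have hub₀ : c.toSubgraph.Adj u (u.1, j) := by
    rw [← Subgraph.mem_neighborSet, hNu]; exact Set.mem_insert_of_mem _ rfl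
  have hNu' := ladderGraph_neighborSet_toSubgraph_of_maxColumn hc
    (Walk.mem_support_of_adj_toSubgraph huu'.symm) hmax
  have hu'b₁ : c.toSubgraph.Adj (u.1.rev, u.2) (u.1.rev, j) := by
    rw [← Subgraph.mem_neighborSet, hNu']; exact Set.mem_insert_of_mem _ rfl
  refine ⟨(u.1, j), (u.1.rev, j), Walk.mem_support_of_adj_toSubgraph hub₀.symm,
    Walk.mem_support_of_adj_toSubgraph hu'b₁.symm,
    ladderGraph_adj.mpr (Or.inl ⟨(fin_two_rev_ne_self _).symm, rfl⟩), fun hb ↦ ?_⟩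
  have := hc.length_le_four_of_square (fun h ↦ fin_two_rev_ne_self u.1 (congrArg Prod.fst h).symm)
    (fun h ↦ fin_two_rev_ne_self u.1 (congrArg Prod.fst h)) huu' hu'b₁
    (Walk.adj_toSubgraph_iff_mem_edges.mpr hb).symm hub₀.symm
  omega

lemma ladderGraph_chordalBipartite : (ladderGraph k).ChordalBipartite :=
  ⟨ladderGraph_colorable_two, fun _ _ hc hlen ↦ ladderGraph_cycleHasChord hc hlen⟩

lemma ladderGraph_induce_preconnected_of_row_disjoint {S : Set (Fin 2 × Fin k)} {t : Fin 2}
    (ht : ∀ j, (t, j) ∉ S) : ((ladderGraph k).induce Sᶜ).Preconnected := by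
  let row : pathGraph k →g (ladderGraph k).induce Sᶜ :=
    ⟨fun j ↦ ⟨(t, j), ht j⟩, fun h ↦ by simpa [ladderGraph_adj] using h⟩
  have hrung : ∀ x : ↥Sᶜ, ((ladderGraph k).induce Sᶜ).Reachable x (row x.1.2) := by
    intro x
    by_cases hx : x.1.1 = t
    · exact (Subtype.ext (Prod.ext hx rfl) : x = row x.1.2) ▸ Reachable.refl x
    · exact Adj.reachable (by simpa [row, pathGraph_two_eq_top] using hx)
  intro x y
  exact (hrung x).trans ((pathGraph_preconnected k x.1.2 y.1.2).map row |>.trans (hrung y).symm)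

lemma two_le_vertexConnectivity_ladderGraph (hk : 2 ≤ k) :
    2 ≤ (ladderGraph k).vertexConnectivity := by
  have hcard : Nat.card (Fin 2 × Fin k) = 2 * k := by
    rw [Nat.card_prod, Nat.card_fin, Nat.card_fin]
  refine le_vertexConnectivity (by omega) fun S hS ↦ ?_
  obtain ⟨t, ht⟩ : ∃ t : Fin 2, ∀ j, (t, j) ∉ S := by
    by_contra! h
    obtain ⟨⟨j₀, h₀⟩, ⟨j₁, h₁⟩⟩ := And.intro (h 0) (h 1)
    have := (Set.one_lt_ncard).mpr ⟨_, h₀, _, h₁, by simp⟩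
    omega
  exact ladderGraph_induce_preconnected_of_row_disjoint ht

lemma ncard_edgeSet_ladderGraph (m : ℕ) : (ladderGraph (m + 1)).edgeSet.ncard = 3 * m + 1 := by
  rw [ncard_edgeSet_boxProd, ncard_edgeSet_pathGraph, ncard_edgeSet_pathGraph, Nat.card_fin,
    Nat.card_fin]
  ring

end SimpleGraph

theorem stmt11 (n : ℕ) (hn : 4 ≤ n) (heven : Even n) :
    ((pathGraph 2).boxProd (pathGraph (n / 2))).ChordalBipartite ∧
    2 ≤ ((pathGraph 2).boxProd (pathGraph (n / 2))).vertexConnectivity ∧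
    Nat.card (Fin 2 × Fin (n / 2)) = n ∧
    2 * ((pathGraph 2).boxProd (pathGraph (n / 2))).edgeSet.ncard = 3 * n - 4 := by
  obtain ⟨k, rfl⟩ := heven
  obtain ⟨m, rfl⟩ : ∃ m, k = m + 1 := ⟨k - 1, by omega⟩
  rw [show (m + 1 + (m + 1)) / 2 = m + 1 by omega]
  refine ⟨ladderGraph_chordalBipartite, two_le_vertexConnectivity_ladderGraph (by omega),
    by rw [Nat.card_prod, Nat.card_fin, Nat.card_fin]; ring, ?_⟩
  rw [ncard_edgeSet_ladderGraph]
  omega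
end

section
/- Let G be a 2-connected chordal bipartite graph, uv a bisimplicial edge of G such that G ⊖ uv has a cut vertex s with N_G(v)\{u} = {s}. Then G − v is 2-connected. -/
open SimpleGraph

variable {V : Type*}

/-!
Every neighbour of `v` other than `u` is `s`, so `G - v` is 2-connected as soon as `u` and `s`
are joined in `G - {v, w}` for every further vertex `w`. If `u` has a neighbour `x ∉ {v, w}`,
bisimpliciality of `uv` makes `x` adjacent to `s` (or `x = s`), giving the path `u x s`.
Otherwise `u` has at most one neighbour in `G - {v, s}` and `v` has at most one in `G - s`, so
deleting `v` and then `u` from the connected graph `G - s` keeps it connected, contradicting the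
assumption that `s` is a cut vertex of `G ⊖ uv`.
-/

namespace SimpleGraph

variable {G : SimpleGraph V}

section VertexConnectivity

variable [Finite V]

lemma preconnected_induce_compl_of_ncard_le_one (h2 : 2 ≤ G.vertexConnectivity) {S : Set V}
    (hS : S.ncard ≤ 1) : (G.induce Sᶜ).Preconnected := by
  classical
  by_contra hcut
  rw [vertexConnectivity, if_pos ⟨S, hcut⟩] at h2
  have := Nat.sInf_le (show S.ncard ∈ {n | ∃ T : Set V, T.ncard = n ∧ G.IsVertexCutSet T} from
    ⟨S, rfl, hcut⟩)
  omega

lemma two_le_vertexConnectivity_of_preconnected_induce_compl_singleton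
    (hcard : 3 ≤ Nat.card V) (h : ∀ w, (G.induce {w}ᶜ).Preconnected) :
    2 ≤ G.vertexConnectivity := by
  classical
  rw [vertexConnectivity]
  split_ifs with hcut
  · obtain ⟨S, hS⟩ := hcut
    refine le_csInf ⟨S.ncard, S, rfl, hS⟩ ?_
    rintro n ⟨S, rfl, hS⟩
    by_contra! hS1
    apply hS
    obtain rfl | ⟨w, rfl⟩ := (Set.ncard_le_one_iff_eq).1 (Nat.le_of_lt_succ hS1)
    · -- deleting a third vertex `w` leaves `a` and `b` joined
      rintro ⟨a, ha⟩ ⟨b, hb⟩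
      obtain ⟨w, hw⟩ : ({a, b}ᶜ : Set V).Nonempty := by
        refine Set.nonempty_compl.2 fun hab => ?_
        have := Set.ncard_insert_le a {b}
        rw [hab, Set.ncard_univ, Set.ncard_singleton] at this
        omega
      exact (h w ⟨a, fun h => hw (Or.inl h.symm)⟩ ⟨b, fun h => hw (Or.inr h.symm)⟩).map
        (G.induceHomOfLE (Set.compl_subset_compl.2 (Set.empty_subset _))).toHom
    · exact h w
  · omega

end VertexConnectivity

/-- The walk may pass through `v`; a visit to `v` is stood in for by any of its neighbours `z`. -/
lemma reachable_induce_compl_insert_of_walk {S : Set V} {v : V}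
    (hN : ∀ x y (hx : x ∈ (insert v S)ᶜ) (hy : y ∈ (insert v S)ᶜ), G.Adj v x → G.Adj v y →
      (G.induce (insert v S)ᶜ).Reachable ⟨x, hx⟩ ⟨y, hy⟩)
    {a b : (Sᶜ : Set V)} (p : (G.induce Sᶜ).Walk a b) (hb : (b : V) ∈ (insert v S)ᶜ) :
    ∀ z (hz : z ∈ (insert v S)ᶜ), (z = a ∨ (a : V) = v ∧ G.Adj v z) →
      (G.induce (insert v S)ᶜ).Reachable ⟨z, hz⟩ ⟨b, hb⟩ := by
  induction p with
  | nil =>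
    rintro z hz (rfl | ⟨hbv, -⟩)
    · rfl
    · simp [hbv] at hb
  | @cons a c b hac q ih =>
    have hac : G.Adj a c := hac
    rintro z hz (rfl | ⟨hav, hvz⟩)
    · by_cases hcv : (c : V) = v
      · exact ih hb _ hz (Or.inr ⟨hcv, hcv ▸ hac.symm⟩)
      · have hc : (c : V) ∈ (insert v S)ᶜ := fun h => h.elim hcv c.2
        exact (show (G.induce (insert v S)ᶜ).Adj ⟨a, hz⟩ ⟨c, hc⟩ from hac).reachable.trans
          (ih hb c hc (Or.inl rfl))
    · have hc : (c : V) ∈ (insert v S)ᶜ :=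
        fun h => h.elim (fun hcv => hac.ne' (hcv.trans hav.symm)) c.2
      exact (hN z c hz hc hvz (hav ▸ hac)).trans (ih hb c hc (Or.inl rfl))

lemma Preconnected.induce_compl_insert {S : Set V} {v : V} (hS : (G.induce Sᶜ).Preconnected)
    (hN : ∀ x y (hx : x ∈ (insert v S)ᶜ) (hy : y ∈ (insert v S)ᶜ), G.Adj v x → G.Adj v y →
      (G.induce (insert v S)ᶜ).Reachable ⟨x, hx⟩ ⟨y, hy⟩) :
    (G.induce (insert v S)ᶜ).Preconnected := by
  rintro ⟨a, ha⟩ ⟨b, hb⟩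
  have ha' : a ∈ Sᶜ := fun h => ha (Set.mem_insert_of_mem v h)
  have hb' : b ∈ Sᶜ := fun h => hb (Set.mem_insert_of_mem v h)
  obtain ⟨p⟩ := hS ⟨a, ha'⟩ ⟨b, hb'⟩
  exact reachable_induce_compl_insert_of_walk hN p hb a ha (Or.inl rfl)

lemma Preconnected.induce_compl_insert_of_subsingleton {S : Set V} {v : V}
    (hS : (G.induce Sᶜ).Preconnected)
    (hN : ∀ x ∈ (insert v S)ᶜ, ∀ y ∈ (insert v S)ᶜ, G.Adj v x → G.Adj v y → x = y) :
    (G.induce (insert v S)ᶜ).Preconnected :=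
  hS.induce_compl_insert fun x y hx hy hvx hvy => by
    obtain rfl := hN x hx y hy hvx hvy
    rfl

lemma Preconnected.induce_induce_compl_singleton {v : V} {w : ({v}ᶜ : Set V)}
    (h : (G.induce {v, (w : V)}ᶜ).Preconnected) :
    ((G.induce {v}ᶜ).induce {w}ᶜ).Preconnected := by
  let f : G.induce {v, (w : V)}ᶜ →g (G.induce {v}ᶜ).induce {w}ᶜ :=
    { toFun := fun z =>
        ⟨⟨z, fun h => z.2 (Or.inl h)⟩, fun h => z.2 (Or.inr (congrArg Subtype.val h))⟩
      map_rel' := id }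
  refine h.map f ?_
  rintro ⟨⟨a, hav⟩, haw⟩
  refine ⟨⟨a, ?_⟩, rfl⟩
  rintro (h | h)
  exacts [hav h, haw (Subtype.ext h)]

section BisimplicialEdge

variable {u v s : V}

lemma adj_of_neighborSet_diff_eq (hNv : G.neighborSet v \ {u} = {s}) : G.Adj v s ∧ s ≠ u :=
  show s ∈ G.neighborSet v \ {u} from hNv ▸ rfl

lemma eq_or_eq_of_neighborSet_diff_eq (hNv : G.neighborSet v \ {u} = {s}) {x : V}
    (hx : G.Adj v x) : x = u ∨ x = s :=
  or_iff_not_imp_left.2 fun hxu => show x ∈ ({s} : Set V) from hNv ▸ ⟨hx, hxu⟩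

variable [Finite V]

lemma preconnected_induce_compl_triple (h2 : 2 ≤ G.vertexConnectivity)
    (hNv : G.neighborSet v \ {u} = {s}) {w : V} (hNu : ∀ x, G.Adj u x → x = v ∨ x = w) :
    (G.induce {u, v, s}ᶜ).Preconnected := by
  refine ((preconnected_induce_compl_of_ncard_le_one h2 (S := {s}) (by simp))
    |>.induce_compl_insert_of_subsingleton ?_).induce_compl_insert_of_subsingleton ?_
  · intro x hx y hy hvx hvy
    have other_eq_u {z} (hz : z ∈ ({v, s} : Set V)ᶜ) (hvz : G.Adj v z) : z = u :=
      (eq_or_eq_of_neighborSet_diff_eq hNv hvz).resolve_right fun h => hz (Or.inr h)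
    exact (other_eq_u hx hvx).trans (other_eq_u hy hvy).symm
  · intro x hx y hy hux huy
    have other_eq_w {z} (hz : z ∈ ({u, v, s} : Set V)ᶜ) (huz : G.Adj u z) : z = w :=
      (hNu z huz).resolve_left fun h => hz (Or.inr (Or.inl h))
    exact (other_eq_w hx hux).trans (other_eq_w hy huy).symm

lemma reachable_induce_compl_pair (h2 : 2 ≤ G.vertexConnectivity)
    (huv : G.IsBisimplicialEdge u v) (hcut : ¬ (G.induce {u, v, s}ᶜ).Preconnected)
    (hNv : G.neighborSet v \ {u} = {s}) {w : V} (hu : u ∈ ({v, w} : Set V)ᶜ)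
    (hs : s ∈ ({v, w} : Set V)ᶜ) : (G.induce {v, w}ᶜ).Reachable ⟨u, hu⟩ ⟨s, hs⟩ := by
  obtain ⟨x, hux, hx⟩ : ∃ x, G.Adj u x ∧ x ∈ ({v, w} : Set V)ᶜ := by
    by_contra! hNu
    exact hcut <|
      preconnected_induce_compl_triple h2 hNv (w := w) fun x hux => not_not.1 (hNu x hux)
  have hux : (G.induce {v, w}ᶜ).Adj ⟨u, hu⟩ ⟨x, hx⟩ := hux
  obtain rfl | hxs := eq_or_ne x s
  · exact hux.reachable
  · exact hux.reachable.trans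
      (Adj.reachable (huv.2 x s hux (adj_of_neighborSet_diff_eq hNv).1 hxs))

lemma preconnected_induce_compl_pair (h2 : 2 ≤ G.vertexConnectivity)
    (huv : G.IsBisimplicialEdge u v) (hcut : ¬ (G.induce {u, v, s}ᶜ).Preconnected)
    (hNv : G.neighborSet v \ {u} = {s}) (w : V) : (G.induce {v, w}ᶜ).Preconnected := by
  refine (preconnected_induce_compl_of_ncard_le_one h2 (S := {w}) (by simp))
    |>.induce_compl_insert ?_
  intro x y hx hy hvx hvy
  rcases eq_or_eq_of_neighborSet_diff_eq hNv hvx with rfl | rfl <;>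
    rcases eq_or_eq_of_neighborSet_diff_eq hNv hvy with rfl | rfl
  · rfl
  · exact reachable_induce_compl_pair h2 huv hcut hNv hx hy
  · exact (reachable_induce_compl_pair h2 huv hcut hNv hy hx).symm
  · rfl

end BisimplicialEdge

end SimpleGraph

theorem stmt16_general [Finite V] (G : SimpleGraph V)
    (h2 : 2 ≤ G.vertexConnectivity) (u v s : V)
    (huv : G.IsBisimplicialEdge u v)
    (hcut : ¬ (G.induce (({u, v, s} : Set V)ᶜ)).Preconnected)
    (hNv : G.neighborSet v \ {u} = {s}) :
    2 ≤ (G.induce ({v}ᶜ : Set V)).vertexConnectivity := by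
  obtain ⟨hvs, hsu⟩ := adj_of_neighborSet_diff_eq hNv
  obtain ⟨a, ha⟩ : ({u, v, s} : Set V)ᶜ.Nonempty :=
    Set.nonempty_iff_ne_empty.2 fun he => hcut (he ▸ fun x => x.2.elim)
  simp only [Set.mem_compl_iff, Set.mem_insert_iff, Set.mem_singleton_iff, not_or] at ha
  refine two_le_vertexConnectivity_of_preconnected_induce_compl_singleton ?_ fun w =>
    (preconnected_induce_compl_pair h2 huv hcut hNv w).induce_induce_compl_singleton
  rw [Nat.card_coe_set_eq, Nat.succ_le_iff, Set.two_lt_ncard_iff]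
  exact ⟨u, s, a, huv.1.ne, hvs.ne', ha.2.1, hsu.symm, Ne.symm ha.1, Ne.symm ha.2.2⟩

theorem stmt16 [Finite V] (G : SimpleGraph V) (hcb : G.ChordalBipartite)
    (h2 : 2 ≤ G.vertexConnectivity) (u v s : V)
    (huv : G.IsBisimplicialEdge u v) (hs : s ∈ (({u, v} : Set V)ᶜ))
    (hcut : ¬ (G.induce (({u, v, s} : Set V)ᶜ)).Preconnected)
    (hNv : G.neighborSet v \ {u} = {s}) :
    2 ≤ (G.induce ({v}ᶜ : Set V)).vertexConnectivity :=
  stmt16_general G h2 u v s huv hcut hNv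
end
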